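/- arXiv:cs/0007032 — 7 statements merged into one kernel-verified Lean document; each statement's English description precedes it below -/
import Mathlib

section
/- In a treelike model, the formula (□Kφ ∧ ◇L(ψ ∧ □φ)) → L(◇ψ ∧ □φ) is valid; that is, for every point x and subset U ∋ x, if x,U ⊨ □Kφ ∧ ◇L(ψ ∧ □φ) then x,U ⊨ L(◇ψ ∧ □φ). -/
inductive Fml (α : Type) : Type
  | atom : α → Fml α
  | neg : Fml α → Fml α
  | and : Fml α → Fml α → Fml α
  | K : Fml α → Fml α
  | box : Fml α → Fml α

def Fml.imp {α : Type} (φ ψ : Fml α) : Fml α := (φ.and ψ.neg).neg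
def Fml.or {α : Type} (φ ψ : Fml α) : Fml α := (φ.neg.and ψ.neg).neg
def Fml.dia {α : Type} (φ : Fml α) : Fml α := φ.neg.box.neg
def Fml.L {α : Type} (φ : Fml α) : Fml α := φ.neg.K.neg

/-- Satisfaction in a subset model `⟨X, O, i⟩` at a pair `(x, U)`. -/
def Sat {X α : Type} (O : Set (Set X)) (i : α → Set X) : X → Set X → Fml α → Prop
  | x, _, .atom A => x ∈ i A
  | x, U, .neg φ => ¬ Sat O i x U φ
  | x, U, .and φ ψ => Sat O i x U φ ∧ Sat O i x U ψ
  | x, U, .K φ => ∀ y ∈ U, Sat O i y U φ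
  | x, U, .box φ => ∀ V ∈ O, x ∈ V → V ⊆ U → Sat O i x V φ

/-- A treelike space: `X ∈ O` and any two members of `O` are comparable or disjoint. -/
def Treelike {X : Type} (O : Set (Set X)) : Prop :=
  Set.univ ∈ O ∧ ∀ U ∈ O, ∀ V ∈ O, U ⊆ V ∨ V ⊆ U ∨ U ∩ V = ∅


section

variable {X α : Type} {O : Set (Set X)} {i : α → Set X}

theorem sat_dia_iff {x : X} {U : Set X} {φ : Fml α} :
    Sat O i x U φ.dia ↔ ∃ V ∈ O, x ∈ V ∧ V ⊆ U ∧ Sat O i x V φ := by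
  simp only [Fml.dia, Sat, not_forall, not_not, exists_prop]

theorem sat_L_iff {x : X} {U : Set X} {φ : Fml α} :
    Sat O i x U φ.L ↔ ∃ y ∈ U, Sat O i y U φ := by
  simp only [Fml.L, Sat, not_forall, not_not, exists_prop]

/-- An open `W ∋ y` below `U` lies inside `V`, contains `V` (hence `x`, where `□Kφ` applies),
or is disjoint from `V`, which `y ∈ V` rules out. -/
theorem Treelike.sat_box_of_sat_box_K {x y : X} {U V : Set X} {φ : Fml α} (hT : Treelike O)
    (hV : V ∈ O) (hxV : x ∈ V) (hyV : y ∈ V)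
    (hKφ : Sat O i x U φ.K.box) (hφ : Sat O i y V φ.box) : Sat O i y U φ.box := by
  intro W hW hyW hWU
  rcases hT.2 W hW V hV with hWV | hVW | hdisj
  · exact hφ W hW hyW hWV
  · exact hKφ W hW (hVW hxV) hWU y hyW
  · exact (Set.eq_empty_iff_forall_notMem.1 hdisj y ⟨hyW, hyV⟩).elim

end

theorem ntree_valid_general {X α : Type} (O : Set (Set X)) (i : α → Set X) (hT : Treelike O)
    (φ ψ : Fml α) (x : X) (U : Set X)
    (h : Sat O i x U ((φ.K.box).and (Fml.dia (Fml.L (ψ.and φ.box))))) :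
    Sat O i x U (Fml.L ((ψ.dia).and φ.box)) := by
  obtain ⟨hKφ, hdia⟩ := h
  obtain ⟨V, hV, hxV, hVU, hL⟩ := sat_dia_iff.1 hdia
  obtain ⟨y, hyV, hψ, hφ⟩ := sat_L_iff.1 hL
  exact sat_L_iff.2 ⟨y, hVU hyV, sat_dia_iff.2 ⟨V, hV, hyV, hVU, hψ⟩,
    hT.sat_box_of_sat_box_K hV hxV hyV hKφ hφ⟩

/-- In a treelike model, `(□Kφ ∧ ◇L(ψ ∧ □φ)) → L(◇ψ ∧ □φ)` is valid. -/
theorem ntree_valid {X α : Type} (O : Set (Set X)) (i : α → Set X) (hT : Treelike O)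
    (φ ψ : Fml α) (x : X) (U : Set X) (hU : U ∈ O) (hx : x ∈ U)
    (h : Sat O i x U ((φ.K.box).and (Fml.dia (Fml.L (ψ.and φ.box))))) :
    Sat O i x U (Fml.L ((ψ.dia).and φ.box)) :=
  ntree_valid_general O i hT φ ψ x U h
end

section
/- In any treelike model, the formula □◇φ → ◇□φ is valid: for all x ∈ U ∈ 𝒪, if x,U ⊨ □◇φ then x,U ⊨ ◇□φ. -/
/-- Discrete intermediate value: if `k a` holds and `k b` fails with `a ≤ b`, there
is a "true-to-false" transition point at or after `a`. -/
lemma ivt_aux (k : ℕ → Prop) :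
    ∀ b a, a ≤ b → k a → ¬ k b → ∃ m, a ≤ m ∧ k m ∧ ¬ k (m + 1) := by
  intro b
  induction b with
  | zero =>
    intro a ha hka hkb
    have : a = 0 := Nat.le_zero.mp ha
    subst this; exact absurd hka hkb
  | succ b ih =>
    intro a ha hka hkb
    by_cases hab : a = b + 1
    · subst hab; exact absurd hka hkb
    · have ha' : a ≤ b := by omega
      by_cases hb : k b
      · exact ⟨b, ha', hb, hkb⟩
      · exact ih a ha' hka hb

/-- If a boolean sequence has only finitely many true-to-false transitions,
then it has only finitely many transitions. -/
lemma flips_finite_of_tf (k : ℕ → Prop)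
    (h : {n | k n ∧ ¬ k (n + 1)}.Finite) :
    {n | ¬ (k n ↔ k (n + 1))}.Finite := by
  classical
  obtain ⟨N, hN⟩ := h.bddAbove
  have hB : {n | ¬ k n ∧ k (n + 1)}.Finite := by
    rw [← Set.not_infinite]
    intro hinf
    obtain ⟨n₁, hn₁, hn₁N⟩ := hinf.exists_gt N
    obtain ⟨n₂, hn₂, hn₂n₁⟩ := hinf.exists_gt n₁
    obtain ⟨m, hm1, hm2, hm3⟩ := ivt_aux k n₂ (n₁ + 1) (by omega) hn₁.2 hn₂.1
    have : m ≤ N := hN ⟨hm2, hm3⟩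
    omega
  apply (h.union hB).subset
  intro n hn
  simp only [Set.mem_setOf_eq] at hn
  simp only [Set.mem_setOf_eq, Set.mem_union]
  by_cases h1 : k n <;> by_cases h2 : k (n + 1) <;> tauto

/-- Along any descending ω-chain of opens in a treelike space, any formula changes
its truth value (at points remaining in the chain) at only finitely many positions. -/
lemma flip_finite {X α : Type} (O : Set (Set X)) (i : α → Set X) (hT : Treelike O)
    (φ : Fml α) :
    ∀ V : ℕ → Set X, (∀ n, V n ∈ O) → (∀ n, V (n + 1) ⊆ V n) →
    {n : ℕ | ∃ y ∈ V (n + 1), ¬ (Sat O i y (V n) φ ↔ Sat O i y (V (n + 1)) φ)}.Finite := by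
  classical
  induction φ with
  | atom A =>
    intro V hVO hVs
    have : {n : ℕ | ∃ y ∈ V (n + 1),
        ¬ (Sat O i y (V n) (.atom A) ↔ Sat O i y (V (n + 1)) (.atom A))} = ∅ := by
      ext n; simp [Sat]
    rw [this]; exact Set.finite_empty
  | neg ψ ih =>
    intro V hVO hVs
    apply (ih V hVO hVs).subset
    rintro n ⟨y, hy, hiff⟩
    exact ⟨y, hy, fun hi => hiff (by simp only [Sat]; exact not_congr hi)⟩
  | and ψ χ ihψ ihχ =>
    intro V hVO hVs
    apply ((ihψ V hVO hVs).union (ihχ V hVO hVs)).subset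
    rintro n ⟨y, hy, hiff⟩
    simp only [Sat] at hiff
    simp only [Set.mem_union, Set.mem_setOf_eq]
    by_cases h1 : Sat O i y (V n) ψ ↔ Sat O i y (V (n + 1)) ψ
    · right; exact ⟨y, hy, fun h2 => hiff (and_congr h1 h2)⟩
    · left; exact ⟨y, hy, h1⟩
  | K ψ ih =>
    intro V hVO hVs
    set k : ℕ → Prop := fun n => ∀ z ∈ V n, Sat O i z (V n) ψ with hk
    have hA : {n | k n ∧ ¬ k (n + 1)}.Finite := by
      apply (ih V hVO hVs).subset
      rintro n ⟨h1, h2⟩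
      simp only [hk, not_forall] at h2
      obtain ⟨z, hz, hz2⟩ := h2
      exact ⟨z, hz, fun hi => hz2 (hi.mp (h1 z (hVs n hz)))⟩
    apply (flips_finite_of_tf k hA).subset
    rintro n ⟨y, _, hiff⟩
    simp only [Set.mem_setOf_eq]
    intro hi
    exact hiff (by simp only [Sat]; exact hi)
  | box ψ ih =>
    intro V hVO hVs
    rw [← Set.not_infinite]
    intro hinf
    set S := {n : ℕ | ∃ y ∈ V (n + 1),
        ¬ (Sat O i y (V n) (.box ψ) ↔ Sat O i y (V (n + 1)) (.box ψ))} with hS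
    have key : ∀ n, ∃ W, W ∈ O ∧ W ⊆ V n ∧ V (n + 1) ⊆ W ∧
        (n ∈ S → ∃ y ∈ V (n + 1), ¬ Sat O i y W ψ ∧ Sat O i y (V (n + 1)) ψ) := by
      intro n
      by_cases hn : n ∈ S
      · obtain ⟨y, hy, hiff⟩ := hn
        -- box is antitone along the chain
        have hmono : Sat O i y (V n) (.box ψ) → Sat O i y (V (n + 1)) (.box ψ) := by
          intro hb
          intro W hW hyW hWsub
          exact hb W hW hyW (hWsub.trans (hVs n))
        have h2 : Sat O i y (V (n + 1)) (.box ψ) := by tauto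
        have h1 : ¬ Sat O i y (V n) (.box ψ) := by tauto
        simp only [Sat, not_forall] at h1
        obtain ⟨W, hWO, hyW, hWV, hWbad⟩ := h1
        have hWnot : ¬ W ⊆ V (n + 1) := fun hss => hWbad (h2 W hWO hyW hss)
        have hcomp := hT.2 W hWO (V (n + 1)) (hVO (n + 1))
        have hVW : V (n + 1) ⊆ W := by
          rcases hcomp with h | h | h
          · exact absurd h hWnot
          · exact h
          · exfalso
            have : y ∈ W ∩ V (n + 1) := ⟨hyW, hy⟩
            rw [h] at this; exact this
        have hyV : Sat O i y (V (n + 1)) ψ :=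
          h2 (V (n + 1)) (hVO (n + 1)) hy subset_rfl
        exact ⟨W, hWO, hWV, hVW, fun _ => ⟨y, hy, hWbad, hyV⟩⟩
      · exact ⟨V n, hVO n, subset_rfl, hVs n, fun hn' => absurd hn' hn⟩
    choose W hWO hWsub hWsup hWspec using key
    set C : ℕ → Set X := fun m => if m % 2 = 0 then V (m / 2) else W (m / 2) with hC
    have hCO : ∀ m, C m ∈ O := by
      intro m
      simp only [hC]
      split
      · exact hVO _
      · exact hWO _
    have hCs : ∀ m, C (m + 1) ⊆ C m := by
      intro m
      rcases Nat.even_or_odd m with ⟨t, ht⟩ | ⟨t, ht⟩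
      · have e1 : m % 2 = 0 := by omega
        have e2 : m / 2 = t := by omega
        have e3 : (m + 1) % 2 = 1 := by omega
        have e4 : (m + 1) / 2 = t := by omega
        simp only [hC, e1, e2, e3, e4]
        norm_num
        exact hWsub t
      · have e1 : m % 2 = 1 := by omega
        have e2 : m / 2 = t := by omega
        have e3 : (m + 1) % 2 = 0 := by omega
        have e4 : (m + 1) / 2 = t + 1 := by omega
        simp only [hC, e1, e2, e3, e4]
        norm_num
        exact hWsup t
    have hF := ih C hCO hCs
    have hsub : (fun n => 2 * n + 1) '' S ⊆
        {m : ℕ | ∃ y ∈ C (m + 1), ¬ (Sat O i y (C m) ψ ↔ Sat O i y (C (m + 1)) ψ)} := by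
      rintro m ⟨n, hn, rfl⟩
      obtain ⟨y, hy, hbad, hgood⟩ := hWspec n hn
      have e1 : C (2 * n + 1) = W n := by
        have a1 : (2 * n + 1) % 2 = 1 := by omega
        have a2 : (2 * n + 1) / 2 = n := by omega
        simp only [hC, a1, a2]
        norm_num
      have e2 : C (2 * n + 1 + 1) = V (n + 1) := by
        have a1 : (2 * n + 1 + 1) % 2 = 0 := by omega
        have a2 : (2 * n + 1 + 1) / 2 = n + 1 := by omega
        simp only [hC, a1, a2]
        norm_num
      refine ⟨y, ?_, ?_⟩
      · rw [e2]; exact hy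
      · rw [e1, e2]
        intro hi
        exact hbad (hi.mpr hgood)
    have himg : ((fun n => 2 * n + 1) '' S).Infinite :=
      hinf.image (fun a _ b _ hab => by omega)
    exact (himg.mono hsub) hF

/-- In any treelike model, `□◇φ → ◇□φ` is valid. -/
theorem boxdia_valid {X α : Type} (O : Set (Set X)) (i : α → Set X) (hT : Treelike O)
    (φ : Fml α) (x : X) (U : Set X) (hU : U ∈ O) (hx : x ∈ U)
    (h : Sat O i x U (φ.dia.box)) :
    Sat O i x U (φ.box.dia) := by
  classical
  simp only [Fml.dia, Sat] at h ⊢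
  intro hc
  -- hc : ∀ V ∈ O, x ∈ V → V ⊆ U → ¬¬ ... (it is the box over neg of box φ)
  -- From h and hc, build an alternating descending chain.
  have step : ∀ V, V ∈ O → x ∈ V → V ⊆ U →
      ∃ W, W ∈ O ∧ x ∈ W ∧ W ⊆ V ∧ ¬ (Sat O i x V φ ↔ Sat O i x W φ) := by
    intro V hVO hxV hVU
    by_cases ht : Sat O i x V φ
    · -- use hc : no box φ below
      have h1 := hc V hVO hxV hVU
      simp only [Sat, not_not, not_forall] at h1
      obtain ⟨W, hWO, hxW, hWV, hWf⟩ := h1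
      exact ⟨W, hWO, hxW, hWV, fun hi => hWf (hi.mp ht)⟩
    · have h2 := h V hVO hxV hVU
      simp only [Sat, not_forall, not_not] at h2
      obtain ⟨W, hWO, hxW, hWV, hWt⟩ := h2
      exact ⟨W, hWO, hxW, hWV, fun hi => ht (hi.mpr hWt)⟩
  let g : ℕ → {p : Set X // p ∈ O ∧ x ∈ p ∧ p ⊆ U} := fun n =>
    Nat.rec ⟨U, hU, hx, subset_rfl⟩
      (fun _ p =>
        ⟨(step p.1 p.2.1 p.2.2.1 p.2.2.2).choose,
         (step p.1 p.2.1 p.2.2.1 p.2.2.2).choose_spec.1,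
         (step p.1 p.2.1 p.2.2.1 p.2.2.2).choose_spec.2.1,
         (step p.1 p.2.1 p.2.2.1 p.2.2.2).choose_spec.2.2.1.trans p.2.2.2⟩) n
  have hgsub : ∀ n, (g (n + 1)).1 ⊆ (g n).1 := fun n =>
    (step (g n).1 (g n).2.1 (g n).2.2.1 (g n).2.2.2).choose_spec.2.2.1
  have hgflip : ∀ n, ¬ (Sat O i x (g n).1 φ ↔ Sat O i x (g (n + 1)).1 φ) := fun n =>
    (step (g n).1 (g n).2.1 (g n).2.2.1 (g n).2.2.2).choose_spec.2.2.2
  have hfin := flip_finite O i hT φ (fun n => (g n).1) (fun n => (g n).2.1) hgsub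
  have hall : ∀ n, n ∈ {n : ℕ | ∃ y ∈ (g (n + 1)).1,
      ¬ (Sat O i y ((g n).1) φ ↔ Sat O i y ((g (n + 1)).1) φ)} :=
    fun n => ⟨x, (g (n + 1)).2.2.1, hgflip n⟩
  exact Set.infinite_univ (hfin.subset (fun n _ => hall n))
end

section
/- In any subset model (not necessarily treelike), the axiom K□φ → □Kφ is valid: for all x ∈ U ∈ 𝒪, if x,U ⊨ K□φ then x,U ⊨ □Kφ. -/
/-- In any subset model, `K□φ → □Kφ` is valid. -/
theorem cross_valid {X α : Type} (O : Set (Set X)) (i : α → Set X)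
    (hX : Set.univ ∈ O)
    (φ : Fml α) (x : X) (U : Set X) (hU : U ∈ O) (hx : x ∈ U)
    (h : Sat O i x U (φ.box.K)) :
    Sat O i x U (φ.K.box) := by
  intro V hV hxV hVU y hyV
  exact h y (hVU hyV) V hV hyV hVU
end

section
/- In any treelike model, the connectedness axiom □(□φ → ψ) ∨ □(□ψ → φ) is valid. -/
/-! Two members of `O` through the same point of a treelike space are nested. If both disjuncts failed at
`(x, U)`, there would be `V, W ∈ O` containing `x` with `□φ ∧ ¬ψ` at `V` and `□ψ ∧ ¬φ` at `W`; whichever of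
`V, W` is the smaller one then satisfies both `φ` and `¬φ`, or both `ψ` and `¬ψ`. -/

theorem Treelike.subset_or_subset_of_mem {X : Type} {O : Set (Set X)} (hT : Treelike O)
    {U V : Set X} (hU : U ∈ O) (hV : V ∈ O) {x : X} (hxU : x ∈ U) (hxV : x ∈ V) :
    U ⊆ V ∨ V ⊆ U := by
  rcases hT.2 U hU V hV with hUV | hVU | hdisj
  · exact .inl hUV
  · exact .inr hVU
  · exact absurd hdisj (Set.nonempty_iff_ne_empty.mp ⟨x, hxU, hxV⟩)

section Sat

variable {X α : Type} {O : Set (Set X)} {i : α → Set X} {x : X} {U : Set X} {φ ψ : Fml α}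

theorem sat_or : Sat O i x U (φ.or ψ) ↔ Sat O i x U φ ∨ Sat O i x U ψ := by
  simp only [Fml.or, Sat, not_and, not_not]
  tauto

theorem not_sat_box_imp :
    ¬ Sat O i x U (φ.imp ψ).box ↔
      ∃ V ∈ O, x ∈ V ∧ V ⊆ U ∧ Sat O i x V φ ∧ ¬ Sat O i x V ψ := by
  simp only [Fml.imp, Sat, not_forall, not_not, exists_prop]

end Sat

theorem conn_valid_general {X α : Type} (O : Set (Set X)) (i : α → Set X) (hT : Treelike O)
    (φ ψ : Fml α) (x : X) (U : Set X) :
    Sat O i x U (((φ.box.imp ψ).box).or ((ψ.box.imp φ).box)) := by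
  rw [sat_or, or_iff_not_and_not]
  rintro ⟨hfirst, hsecond⟩
  obtain ⟨V, hV, hxV, -, hboxφ, hnψ⟩ := not_sat_box_imp.mp hfirst
  obtain ⟨W, hW, hxW, -, hboxψ, hnφ⟩ := not_sat_box_imp.mp hsecond
  rcases hT.subset_or_subset_of_mem hV hW hxV hxW with hVW | hWV
  · exact hnψ (hboxψ V hV hxV hVW)
  · exact hnφ (hboxφ W hW hxW hWV)

/-- In any treelike model, the connectedness axiom `□(□φ → ψ) ∨ □(□ψ → φ)` is valid. -/
theorem conn_valid {X α : Type} (O : Set (Set X)) (i : α → Set X) (hT : Treelike O)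
    (φ ψ : Fml α) (x : X) (U : Set X) (hU : U ∈ O) (hx : x ∈ U) :
    Sat O i x U (((φ.box.imp ψ).box).or ((ψ.box.imp φ).box)) :=
  conn_valid_general O i hT φ ψ x U
end

section
/- If ℱ = {U₁,…,Uₙ} is a stable partition for φ and U₀ ∈ ↓ℱ, then the intersection-closure ℱ' = Cl({U₀, U₁,…,Uₙ}) is also a stable partition for φ: every remainder of ℱ' is contained in some remainder of ℱ, hence stable for φ. -/
/-- `down O U` = the members of `O` contained in `U`. -/
def down {X : Type} (O : Set (Set X)) (U : Set X) : Set (Set X) := {V ∈ O | V ⊆ U}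

/-- The remainder `Rem(ℱ, U) = ↓U \ ⋃_{¬ U ⊆ W, W ∈ ℱ} ↓W`. -/
def Rem {X : Type} (O F : Set (Set X)) (U : Set X) : Set (Set X) :=
  {V | V ∈ down O U ∧ ∀ W ∈ F, ¬ U ⊆ W → ¬ V ⊆ W}

/-- Closure under binary intersections. -/
def InterClosed {X : Type} (F : Set (Set X)) : Prop := ∀ U ∈ F, ∀ V ∈ F, U ∩ V ∈ F

/-- `G` is stable for `φ`: for each point `x`, the truth value of `φ` at `(x,V)`
is the same for all `V ∈ G` containing `x`. -/
def Stable {X α : Type} (O : Set (Set X)) (i : α → Set X) (G : Set (Set X)) (φ : Fml α) : Prop :=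
  ∀ x : X, (∀ V ∈ G, x ∈ V → Sat O i x V φ) ∨ (∀ V ∈ G, x ∈ V → ¬ Sat O i x V φ)

/-- Closure of a family under (finite nonempty) intersections. -/
def Cl {X : Type} (S : Set (Set X)) : Set (Set X) :=
  {V | ∃ T ⊆ S, T.Nonempty ∧ T.Finite ∧ V = ⋂₀ T}

/-! The remainder of `V` in the refined family `ℱ'` lies inside the remainder of the least member
of `ℱ` containing `V`: that member exists because `ℱ` is finite and closed under intersections, and
a member of `ℱ` contains `V` exactly when it contains this least one. -/

section RefinedPartition

variable {X : Type}

lemma InterClosed.exists_least_superset {F : Set (Set X)} (hFin : F.Finite) (hCl : InterClosed F)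
    {V : Set X} (hV : ∃ U ∈ F, V ⊆ U) : ∃ U ∈ F, V ⊆ U ∧ ∀ W ∈ F, V ⊆ W → U ⊆ W := by
  set S := (hFin.subset (Set.sep_subset F (V ⊆ ·))).toFinset
  have hS : S.Nonempty := let ⟨U, hUF, hVU⟩ := hV; ⟨U, by simpa [S] using ⟨hUF, hVU⟩⟩
  refine ⟨S.inf' hS id, Finset.inf'_mem F hCl S hS id fun W hW => by simp_all [S],
    Finset.le_inf' hS id fun W hW => by simp_all [S], fun W hWF hVW => ?_⟩
  exact Finset.inf'_le id (by simpa [S] using ⟨hWF, hVW⟩)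

lemma exists_superset_of_mem_cl {S : Set (Set X)} {V : Set X} (hV : V ∈ Cl S) :
    ∃ U ∈ S, V ⊆ U := by
  obtain ⟨T, hTS, ⟨U, hUT⟩, -, rfl⟩ := hV
  exact ⟨U, hTS hUT, Set.sInter_subset_of_mem hUT⟩

lemma subset_cl (S : Set (Set X)) : S ⊆ Cl S := fun U hU =>
  ⟨{U}, Set.singleton_subset_iff.mpr hU, Set.singleton_nonempty U, Set.finite_singleton U,
    (Set.sInter_singleton U).symm⟩

lemma rem_subset_rem (O : Set (Set X)) {F G : Set (Set X)} (hFG : F ⊆ G) {U V : Set X}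
    (hVU : V ⊆ U) (hU : ∀ W ∈ F, V ⊆ W → U ⊆ W) : Rem O G V ⊆ Rem O F U := by
  rintro W ⟨⟨hWO, hWV⟩, hWrem⟩
  exact ⟨⟨hWO, hWV.trans hVU⟩, fun W' hW'F hUW' => hWrem W' (hFG hW'F) (mt (hU W' hW'F) hUW')⟩

lemma Stable.mono {α : Type} {O : Set (Set X)} {i : α → Set X} {G G' : Set (Set X)} {φ : Fml α}
    (hG : Stable O i G φ) (h : G' ⊆ G) : Stable O i G' φ := fun x =>
  (hG x).imp (fun hl V hV => hl V (h hV)) (fun hr V hV => hr V (h hV))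

end RefinedPartition

theorem refined_stable_partition_general {X α : Type} (O : Set (Set X)) (i : α → Set X)
    (F : Set (Set X)) (hFin : F.Finite) (hCl : InterClosed F) (φ : Fml α)
    (hStab : ∀ U ∈ F, Stable O i (Rem O F U) φ)
    (U₀ : Set X) (hd : ∃ U ∈ F, U₀ ⊆ U) :
    ∀ V ∈ Cl (insert U₀ F),
      (∃ U ∈ F, Rem O (Cl (insert U₀ F)) V ⊆ Rem O F U) ∧
        Stable O i (Rem O (Cl (insert U₀ F)) V) φ := by
  intro V hV
  have hVF : ∃ U ∈ F, V ⊆ U := by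
    obtain ⟨U, hU | hUF, hVU⟩ := exists_superset_of_mem_cl hV
    · obtain ⟨U', hU'F, hU₀U'⟩ := hd
      exact ⟨U', hU'F, (hU ▸ hVU).trans hU₀U'⟩
    · exact ⟨U, hUF, hVU⟩
  obtain ⟨U, hUF, hVU, hUleast⟩ := hCl.exists_least_superset hFin hVF
  have hRem := rem_subset_rem O ((Set.subset_insert U₀ F).trans (subset_cl _)) hVU hUleast
  exact ⟨⟨U, hUF, hRem⟩, (hStab U hUF).mono hRem⟩

/-- If `ℱ` is a stable partition for `φ` and `U₀ ∈ ↓ℱ`, then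
`ℱ' = Cl({U₀} ∪ ℱ)` is also a stable partition for `φ`: every remainder of `ℱ'`
is contained in some remainder of `ℱ`, hence stable for `φ`. -/
theorem refined_stable_partition {X α : Type} (O : Set (Set X)) (i : α → Set X)
    (F : Set (Set X)) (hFin : F.Finite) (hCl : InterClosed F) (φ : Fml α)
    (hStab : ∀ U ∈ F, Stable O i (Rem O F U) φ)
    (U₀ : Set X) (hU₀ : U₀ ∈ O) (hd : ∃ U ∈ F, U₀ ⊆ U) :
    ∀ V ∈ Cl (insert U₀ F),
      (∃ U ∈ F, Rem O (Cl (insert U₀ F)) V ⊆ Rem O F U) ∧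
        Stable O i (Rem O (Cl (insert U₀ F)) V) φ :=
  refined_stable_partition_general O i F hFin hCl φ hStab U₀ hd
end

section
/- Quotient lemma: Let ⟨X,𝒪,i⟩ be a treelike model and define x ∼ y iff (for all U ∈ 𝒪, x ∈ U ↔ y ∈ U) and (for all atoms A, x ∈ i(A) ↔ y ∈ i(A)). Let X* = X/∼, U* = {x* : x ∈ U}, 𝒪* = {U* : U ∈ 𝒪}, i*(A) = {x* : x ∈ i(A)}. Then for all x, U, φ: x,U ⊨ φ in ⟨X,𝒪,i⟩ iff x*,U* ⊨ φ in ⟨X*,𝒪*,i*⟩. -/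
/-- `x ∼ y` iff `x` and `y` belong to the same members of `O` and satisfy the
same atoms. -/
def simRel {X α : Type} (O : Set (Set X)) (i : α → Set X) (x y : X) : Prop :=
  (∀ U ∈ O, (x ∈ U ↔ y ∈ U)) ∧ ∀ A : α, (x ∈ i A ↔ y ∈ i A)

lemma simRel_equiv {X α : Type} (O : Set (Set X)) (i : α → Set X) :
    Equivalence (simRel O i) := by
  constructor
  · intro x; exact ⟨fun U _ => Iff.rfl, fun A => Iff.rfl⟩
  · rintro x y ⟨h1, h2⟩; exact ⟨fun U hU => (h1 U hU).symm, fun A => (h2 A).symm⟩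
  · rintro x y z ⟨h1, h2⟩ ⟨g1, g2⟩
    exact ⟨fun U hU => (h1 U hU).trans (g1 U hU), fun A => (h2 A).trans (g2 A)⟩

lemma simRel_of_quot_eq {X α : Type} {O : Set (Set X)} {i : α → Set X} {x y : X}
    (h : Quot.mk (simRel O i) x = Quot.mk (simRel O i) y) : simRel O i x y :=
  (simRel_equiv O i).eqvGen_iff.mp (Quot.eqvGen_exact h)

lemma mem_image_iff {X α : Type} {O : Set (Set X)} {i : α → Set X} {x : X}
    {S : Set X} (hS : ∀ a b, simRel O i a b → (a ∈ S ↔ b ∈ S)) :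
    Quot.mk (simRel O i) x ∈ Quot.mk (simRel O i) '' S ↔ x ∈ S := by
  constructor
  · rintro ⟨y, hy, hxy⟩
    exact (hS x y (simRel_of_quot_eq hxy.symm)).mpr hy
  · intro h; exact ⟨x, h, rfl⟩

/-- Quotient lemma: truth is preserved under the quotient of a treelike model
by `∼`. -/
theorem quotient_lemma {X α : Type} (O : Set (Set X)) (i : α → Set X)
    (hT : Treelike O) (φ : Fml α) (x : X) (U : Set X) (hU : U ∈ O) (hx : x ∈ U) :
    Sat O i x U φ ↔
      Sat (Set.image (Quot.mk (simRel O i)) '' O)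
        (fun A => Quot.mk (simRel O i) '' i A)
        (Quot.mk (simRel O i) x) (Quot.mk (simRel O i) '' U) φ := by
  set q := Quot.mk (simRel O i) with hq
  have memO : ∀ {S : Set X}, S ∈ O → ∀ {z : X}, (q z ∈ q '' S ↔ z ∈ S) := by
    intro S hS z
    exact mem_image_iff (fun a b hab => hab.1 S hS)
  induction φ generalizing x U with
  | atom A =>
      simpa [Sat] using (mem_image_iff (fun a b hab => hab.2 A)).symm
  | neg φ ih => simp only [Sat]; exact not_congr (ih x U hU hx)
  | and φ ψ ih1 ih2 =>
      simp only [Sat]; exact and_congr (ih1 x U hU hx) (ih2 x U hU hx)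
  | K φ ih =>
      simp only [Sat]
      constructor
      · rintro h y' ⟨y, hy, rfl⟩
        exact (ih y U hU hy).mp (h y hy)
      · intro h y hy
        exact (ih y U hU hy).mpr (h (q y) ⟨y, hy, rfl⟩)
  | box φ ih =>
      simp only [Sat]
      constructor
      · rintro h V' ⟨V, hV, rfl⟩ hxV' hsub
        have hxV : x ∈ V := (memO hV).mp hxV'
        have hVU : V ⊆ U := by
          intro z hz
          exact (memO hU).mp (hsub ⟨z, hz, rfl⟩)
        exact (ih x V hV hxV).mp (h V hV hxV hVU)
      · intro h V hV hxV hVU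
        refine (ih x V hV hxV).mpr (h (q '' V) ⟨V, hV, rfl⟩ ((memO hV).mpr hxV) ?_)
        rintro z' ⟨z, hz, rfl⟩
        exact ⟨z, hVU hz, rfl⟩
end

section
/- In the semi-transitivity lemma setting: given a finite stable partition ℱ of a treelike model and the relation U₁ < U₂ on members with nonempty unions of remainders (defined by: the closures of the remainders intersect, and whenever x lies in both unions with V₁ ∈ Rem(ℱ,U₁), V₂ ∈ Rem(ℱ,U₂) both containing x, then V₁ ⊊ V₂), if U₁ ≤ U₂, U₂ ≤ U₃ and the three unions of remainders have common a point, then U₁ ≤ U₃. -/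
/-- `Ū` = the union of the remainder of `U`. -/
def Ubar {X : Type} (O F : Set (Set X)) (U : Set X) : Set X := ⋃₀ Rem O F U

/-- `U₁ < U₂`: the unions of remainders intersect, and whenever a point lies in
both, the corresponding remainder members containing it are strictly nested. -/
def remLT {X : Type} (O F : Set (Set X)) (U₁ U₂ : Set X) : Prop :=
  (Ubar O F U₁ ∩ Ubar O F U₂).Nonempty ∧
    ∀ (x : X) (V₁ V₂ : Set X), x ∈ Ubar O F U₁ → x ∈ Ubar O F U₂ →
      V₁ ∈ Rem O F U₁ → x ∈ V₁ → V₂ ∈ Rem O F U₂ → x ∈ V₂ → V₁ ⊂ V₂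

def remLE {X : Type} (O F : Set (Set X)) (U₁ U₂ : Set X) : Prop :=
  U₁ = U₂ ∨ remLT O F U₁ U₂

/-- Semi-transitivity: if `U₁ ≤ U₂`, `U₂ ≤ U₃` and the three unions of
remainders share a point, then `U₁ ≤ U₃`. -/
theorem remLE_semitrans {X α : Type} (O : Set (Set X)) (i : α → Set X)
    (hT : Treelike O) (F : Set (Set X)) (hFin : F.Finite) (hCl : InterClosed F)
    (φ : Fml α) (hStab : ∀ U ∈ F, Stable O i (Rem O F U) φ)
    (U₁ U₂ U₃ : Set X) (hU₁ : U₁ ∈ F) (hU₂ : U₂ ∈ F) (hU₃ : U₃ ∈ F)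
    (hx : (Ubar O F U₁ ∩ Ubar O F U₂ ∩ Ubar O F U₃).Nonempty)
    (h₁₂ : remLE O F U₁ U₂) (h₂₃ : remLE O F U₂ U₃) :
    remLE O F U₁ U₃ := by
  rcases h₁₂ with rfl | L12
  · exact h₂₃
  rcases h₂₃ with rfl | L23
  · exact Or.inr L12
  obtain ⟨x, ⟨hx1, hx2⟩, hx3⟩ := hx
  obtain ⟨V₁, hV₁, hxV₁⟩ := hx1
  obtain ⟨V₂, hV₂, hxV₂⟩ := hx2
  obtain ⟨V₃, hV₃, hxV₃⟩ := hx3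
  have hx1 : x ∈ Ubar O F U₁ := ⟨V₁, hV₁, hxV₁⟩
  have hx2 : x ∈ Ubar O F U₂ := ⟨V₂, hV₂, hxV₂⟩
  have hx3 : x ∈ Ubar O F U₃ := ⟨V₃, hV₃, hxV₃⟩
  have h12 : V₁ ⊂ V₂ := L12.2 x V₁ V₂ hx1 hx2 hV₁ hxV₁ hV₂ hxV₂
  have h23 : V₂ ⊂ V₃ := L23.2 x V₂ V₃ hx2 hx3 hV₂ hxV₂ hV₃ hxV₃
  have hU12 : U₁ ⊆ U₂ := by
    have hsub : V₁ ⊆ U₁ ∩ U₂ :=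
      Set.subset_inter hV₁.1.2 (h12.1.trans hV₂.1.2)
    by_contra hc
    have hn : ¬ U₁ ⊆ U₁ ∩ U₂ := fun h => hc (h.trans Set.inter_subset_right)
    exact hV₁.2 _ (hCl U₁ hU₁ U₂ hU₂) hn hsub
  have hU23 : U₂ ⊆ U₃ := by
    have hsub : V₂ ⊆ U₂ ∩ U₃ :=
      Set.subset_inter hV₂.1.2 (h23.1.trans hV₃.1.2)
    by_contra hc
    have hn : ¬ U₂ ⊆ U₂ ∩ U₃ := fun h => hc (h.trans Set.inter_subset_right)
    exact hV₂.2 _ (hCl U₂ hU₂ U₃ hU₃) hn hsub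
  have hne : ¬ U₃ ⊆ U₁ := by
    intro h
    have e12 : U₁ = U₂ := Set.Subset.antisymm hU12 (hU23.trans h)
    subst e12
    exact (L12.2 x V₂ V₂ hx2 hx2 hV₂ hxV₂ hV₂ hxV₂).2 (subset_refl _)
  refine Or.inr ⟨⟨x, hx1, hx3⟩, ?_⟩
  intro y W₁ W₃ _ _ hW₁ hyW₁ hW₃ hyW₃
  have hnot31 : ¬ W₃ ⊆ W₁ := by
    intro h
    exact hW₃.2 U₁ hU₁ hne (h.trans hW₁.1.2)
  rcases hT.2 W₁ hW₁.1.1 W₃ hW₃.1.1 with h | h | h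
  · refine ⟨h, fun h' => hnot31 h'⟩
  · exact absurd h hnot31
  · exact absurd (Set.mem_inter hyW₁ hyW₃) (by simp [h])
end
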